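/- Let R be a weakly generalized p.q.-Baer *-ring. If e and f are projections in R, then there exists a central projection g such that e ≤ g and f ≤ g. -/
import Mathlib


variable {R : Type*} [NonUnitalRing R] [StarRing R]

/-- A projection in a `*`-ring: a self-adjoint idempotent. -/
def IsProj (e : R) : Prop := e * e = e ∧ star e = e

/-- A central element. -/
def IsCentral (e : R) : Prop := ∀ r : R, e * r = r * e

/-- The order on projections: `e ≤ f` iff `e = e * f`. -/
def projLE (e f : R) : Prop := e * f = e

/-- `npow1 x n = x ^ (n + 1)` in a possibly non-unital ring. -/
def npow1 (x : R) : ℕ → R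
  | 0 => x
  | n + 1 => npow1 x n * x

/-- `chain x n f = (x * f 0) * (x * f 1) * ⋯ * (x * f n)`, a typical generator of `(xR)^(n+1)`. -/
def chain (x : R) : ℕ → (ℕ → R) → R
  | 0, f => x * f 0
  | n + 1, f => chain x n f * (x * f (n + 1))

/-- A weakly generalized p.q.-Baer `*`-ring: for every `x` there are a central projection `e`
and `n ≥ 1` with `x ^ n * e = x ^ n` and, for all `y`, `(xR)^n y = 0` iff `e * y = 0`. -/
def IsWeaklyGenPQBaerStar (S : Type*) [NonUnitalRing S] [StarRing S] : Prop :=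
  ∀ x : S, ∃ (e : S) (n : ℕ), IsProj e ∧ IsCentral e ∧ npow1 x n * e = npow1 x n ∧
    ∀ y : S, (∀ f : ℕ → S, chain x n f * y = 0) ↔ e * y = 0

lemma npow1_idem (e : R) (hee : e * e = e) : ∀ n, npow1 e n = e
  | 0 => rfl
  | n + 1 => by rw [npow1, npow1_idem e hee n, hee]

/-- STATEMENT 10 aux above -/
theorem stmt10 (h : IsWeaklyGenPQBaerStar R) (e f : R) (he : IsProj e) (hf : IsProj f) :
    ∃ g : R, IsProj g ∧ IsCentral g ∧ projLE e g ∧ projLE f g := by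
  obtain ⟨g1, n1, ⟨hg1i, hg1s⟩, hg1c, hg1e, -⟩ := h e
  obtain ⟨g2, n2, ⟨hg2i, hg2s⟩, hg2c, hg2f, -⟩ := h f
  rw [npow1_idem e he.1] at hg1e
  rw [npow1_idem f hf.1] at hg2f
  refine ⟨g1 + g2 - g1 * g2, ⟨?_, ?_⟩, ?_, ?_, ?_⟩
  · have c : g1 * g2 = g2 * g1 := hg1c g2
    simp only [mul_sub, sub_mul, mul_add, add_mul]
    rw [hg1i, hg2i, show g2 * g1 = g1 * g2 from c.symm]
    rw [show g1 * (g1 * g2) = g1 * g2 by rw [← mul_assoc, hg1i]]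
    rw [show g1 * g2 * g2 = g1 * g2 by rw [mul_assoc, hg2i]]
    rw [show g1 * g2 * g1 = g1 * g2 by rw [mul_assoc, ← c, ← mul_assoc, hg1i]]
    rw [show g2 * (g1 * g2) = g1 * g2 by rw [← mul_assoc, ← c, mul_assoc, hg2i]]
    rw [show g1 * g2 * (g1 * g2) = g1 * g2 by
      rw [mul_assoc, ← mul_assoc g2, ← c, mul_assoc, hg2i, ← mul_assoc, hg1i]]
    abel
  · rw [star_sub, star_add, star_mul, hg1s, hg2s, ← hg1c g2]
  · intro r
    simp only [sub_mul, add_mul, mul_sub, mul_add]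
    rw [hg1c r, hg2c r, mul_assoc, hg2c r, ← mul_assoc, hg1c r, mul_assoc]
  · show e * (g1 + g2 - g1 * g2) = e
    rw [mul_sub, mul_add, hg1e, ← mul_assoc, hg1e]
    abel
  · show f * (g1 + g2 - g1 * g2) = f
    rw [mul_sub, mul_add, hg2f, show f * (g1 * g2) = f * g1 by
      rw [hg1c g2, ← mul_assoc, hg2f]]
    abel
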